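/- arXiv:1405.1871 — 5 statements merged into one kernel-verified Lean document; each statement's English description precedes it below -/
import Mathlib

section
/- Let λ be a partition with length ℓ(λ) ≤ K for a positive integer K, let σ be a complex number, and let P(a⃗;z) = ∏_{i=1}^{p}(z+a_i) for a list a⃗ = [a_1,…,a_p] of complex numbers. Then ∏_{(i,j)∈λ} P(a⃗; i−j+σ) = ∏_{i=1}^{K} Γ(a⃗; i+σ)/Γ(a⃗; −l_i+σ), where l_i = λ_i − i and Γ(a⃗;z) = ∏_{i=1}^p Γ(z+a_i), provided all gamma factors are defined. -/
/-!
Each row and each parameter contribute separately: with `c = i + σ + a_t`, row `i` contributes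
`∏_{j=1}^{λ_i} (c - j)`, a descending Pochhammer symbol, which equals `Γ(c) / Γ(c - λ_i)`.
-/

open Finset

theorem prod_Icc_sub_eq_Gamma_div {c : ℂ} {n : ℕ} (hc : ∀ k : ℕ, c - n ≠ -k) :
    ∏ j ∈ Icc 1 n, (c - j) = Complex.Gamma c / Complex.Gamma (c - n) := by
  have hpoch := Complex.Gamma_add_nat_div_Gamma_eq (n := n) (c - n) hc
  rw [sub_add_cancel] at hpoch
  rw [hpoch, show c - n = c - 1 - n + 1 by ring, ← descPochhammer_eval_eq_ascPochhammer,
    descPochhammer_eval_eq_prod_range, ← Ico_add_one_right_eq_Icc, range_eq_Ico,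
    ← prod_Ico_add' (fun j : ℕ => c - j) 0 n 1]
  exact prod_congr rfl fun j _ => by push_cast; ring

theorem prod_Icc_sub_add_eq_Gamma_div {z : ℂ} (hz : ∀ m : ℤ, z ≠ m) (i n : ℕ) :
    ∏ j ∈ Icc 1 n, ((i : ℂ) - j + z) = Complex.Gamma (i + z) / Complex.Gamma (-(n - i) + z) := by
  have hc : ∀ k : ℕ, (i + z) - n ≠ -k := fun k h =>
    hz ((n : ℤ) - i - k) (by push_cast; linear_combination h)
  rw [show -((n : ℂ) - i) + z = i + z - n by ring, ← prod_Icc_sub_eq_Gamma_div hc]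
  exact prod_congr rfl fun j _ => by ring

theorem prod_P_over_boxes_general (K p : ℕ) (σ : ℂ) (a : Fin p → ℂ)
    (lam : ℕ → ℕ)
    (hgen : ∀ t : Fin p, ∀ m : ℤ, σ + a t ≠ (m : ℂ)) :
    (∏ i ∈ Finset.Icc 1 K, ∏ j ∈ Finset.Icc 1 (lam i),
        ∏ t : Fin p, (((i : ℂ) - (j : ℂ) + σ) + a t)) =
      ∏ i ∈ Finset.Icc 1 K,
        (∏ t : Fin p, Complex.Gamma (((i : ℂ) + σ) + a t)) /
          (∏ t : Fin p, Complex.Gamma ((-((lam i : ℂ) - (i : ℂ)) + σ) + a t)) := by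
  refine prod_congr rfl fun i _ => ?_
  rw [prod_comm, ← prod_div_distrib]
  refine prod_congr rfl fun t _ => ?_
  simpa only [add_assoc] using prod_Icc_sub_add_eq_Gamma_div (hgen t) i (lam i)

/-- For a partition `λ` (as an antitone function on indices `≥ 1`, vanishing beyond `K`),
`∏_{(i,j)∈λ} P(a⃗; i−j+σ) = ∏_{i=1}^{K} Γ(a⃗; i+σ)/Γ(a⃗; −l_i+σ)` with `l_i = λ_i − i`,
under genericity of `σ + a_t` so that all gamma factors are defined. -/
theorem prod_P_over_boxes (K p : ℕ) (hK : 0 < K) (σ : ℂ) (a : Fin p → ℂ)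
    (lam : ℕ → ℕ)
    (hmono : ∀ i j, 1 ≤ i → i ≤ j → lam j ≤ lam i)
    (hlen : ∀ i, K < i → lam i = 0)
    (hgen : ∀ t : Fin p, ∀ m : ℤ, σ + a t ≠ (m : ℂ)) :
    (∏ i ∈ Finset.Icc 1 K, ∏ j ∈ Finset.Icc 1 (lam i),
        ∏ t : Fin p, (((i : ℂ) - (j : ℂ) + σ) + a t)) =
      ∏ i ∈ Finset.Icc 1 K,
        (∏ t : Fin p, Complex.Gamma (((i : ℂ) + σ) + a t)) /
          (∏ t : Fin p, Complex.Gamma ((-((lam i : ℂ) - (i : ℂ)) + σ) + a t)) :=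
  prod_P_over_boxes_general K p σ a lam hgen
end

section
/- Let λ and μ be partitions with ℓ(λ) ≤ K and ℓ(μ) ≤ K, and let x be a complex number such that all factors below are defined and nonzero. Then ∏_{(i,j)∈λ} (λ'_j + μ_i − i − j + 1 + x) = ∏_{i=1}^{K} [Γ(m_i + K + 1 + x)/Γ(m_i − l_i + x)] · ∏_{1≤i≤j≤K} 1/(m_i − l_j + x), where l_i = λ_i − i and m_i = μ_i − i. -/
/-!
Fix a row `i` and put `z = m_i + x`. The integers `λ'_j - j + 1` (`1 ≤ j ≤ λ_i`) and `t - λ_t`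
(`i ≤ t ≤ K`) are pairwise distinct and all lie in `[i - λ_i, K]`: the two families are strictly
monotone, and they never meet because `t ≤ λ'_j ↔ j ≤ λ_t`. Counting, they fill that interval
exactly, so the row-`i` factor times `∏_{t ≥ i} (z + t - λ_t)` is
`∏_{a = i - λ_i}^{K} (z + a) = Γ(z + K + 1) / Γ(z + i - λ_i)`.
-/

open Finset

theorem Complex.Gamma_add_int_div_Gamma_add_int {z : ℂ} (hz : ∀ m : ℤ, z ≠ m) {p q : ℤ}
    (hpq : p ≤ q) : Complex.Gamma (z + q) / Complex.Gamma (z + p) = ∏ a ∈ Ico p q, (z + a) := by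
  have hzm (m : ℤ) : z + m ≠ 0 := fun h => hz (-m) (by push_cast; linear_combination h)
  induction q, hpq using Int.leInduction with
  | base =>
    refine (div_self (Complex.Gamma_ne_zero fun n h => ?_)).trans (by simp)
    exact hzm (p + n) (by push_cast; linear_combination h)
  | succ q hpq ih =>
    rw [← insert_Ico_right_eq_Ico_add_one hpq, prod_insert right_notMem_Ico, ← ih, Int.cast_add,
      Int.cast_one, ← add_assoc, Complex.Gamma_add_one _ (hzm q), mul_div_assoc]

/-- The column length `λ'_j` of the diagram with rows `lam 1, …, lam K`. -/
def conjugate (K : ℕ) (lam : ℕ → ℕ) (j : ℕ) : ℕ := #{t ∈ Icc 1 K | j ≤ lam t}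

section conjugate

variable {K : ℕ} {lam : ℕ → ℕ}

theorem conjugate_le (j : ℕ) : conjugate K lam j ≤ K := by
  simpa [conjugate] using card_le_card (filter_subset _ (Icc 1 K))

theorem conjugate_antitone : Antitone (conjugate K lam) := fun _ _ h =>
  card_le_card (monotone_filter_right _ fun _ _ => h.trans)

theorem le_conjugate_iff (hlam : AntitoneOn lam (Set.Icc 1 K)) {j t : ℕ} (ht : t ∈ Icc 1 K) :
    t ≤ conjugate K lam j ↔ j ≤ lam t := by
  obtain ⟨ht1, htK⟩ := mem_Icc.1 ht
  refine ⟨fun htj => ?_, fun hjt => ?_⟩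
  · by_contra! hlt
    have hsub : {s ∈ Icc 1 K | j ≤ lam s} ⊆ Ico 1 t := fun s hs => by
      obtain ⟨⟨hs1, hsK⟩, hjs⟩ := And.imp_left mem_Icc.1 (mem_filter.1 hs)
      refine mem_Ico.2 ⟨hs1, lt_of_not_ge fun hts => ?_⟩
      exact (hjs.trans (hlam ⟨ht1, htK⟩ ⟨hs1, hsK⟩ hts)).not_gt hlt
    have := (htj.trans (card_le_card hsub)).trans_eq (Nat.card_Ico 1 t)
    omega
  · have hsub : Icc 1 t ⊆ {s ∈ Icc 1 K | j ≤ lam s} := fun s hs => by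
      obtain ⟨hs1, hst⟩ := mem_Icc.1 hs
      exact mem_filter.2 ⟨mem_Icc.2 ⟨hs1, hst.trans htK⟩,
        hjt.trans (hlam ⟨hs1, hst.trans htK⟩ ⟨ht1, htK⟩ hst)⟩
    simpa [conjugate] using card_le_card hsub

end conjugate

section rows

variable {K : ℕ} {lam : ℕ → ℕ} {i : ℕ}

theorem strictAnti_conjugate_sub_add_one : StrictAnti fun j => (conjugate K lam j : ℤ) - j + 1 :=
  fun a b hab => by
    have := conjugate_antitone (K := K) (lam := lam) hab.le
    dsimp only
    omega

theorem strictMonoOn_id_sub (hlam : AntitoneOn lam (Set.Icc 1 K)) :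
    StrictMonoOn (fun t : ℕ => (t : ℤ) - lam t) (Set.Icc 1 K) := fun a ha b hb hab => by
  have := hlam ha hb hab.le
  simp only
  omega

theorem injOn_id_sub (hlam : AntitoneOn lam (Set.Icc 1 K)) (hi : 1 ≤ i) :
    Set.InjOn (fun t : ℕ => (t : ℤ) - lam t) (Icc i K) :=
  (strictMonoOn_id_sub hlam).injOn.mono fun t ht => by
    simp only [coe_Icc, Set.mem_Icc] at ht ⊢
    omega

theorem disjoint_image_conjugate_image_sub (hlam : AntitoneOn lam (Set.Icc 1 K)) (hi : 1 ≤ i) :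
    Disjoint ((Icc 1 (lam i)).image fun j => (conjugate K lam j : ℤ) - j + 1)
      ((Icc i K).image fun t : ℕ => (t : ℤ) - lam t) := by
  simp only [disjoint_left, mem_image, not_exists, not_and]
  rintro _ ⟨j, -, rfl⟩ t ht hjt
  have ht' : t ∈ Icc 1 K := mem_Icc.2 ⟨hi.trans (mem_Icc.1 ht).1, (mem_Icc.1 ht).2⟩
  have := le_conjugate_iff hlam (j := j) ht'
  by_cases hj : j ≤ lam t <;> simp only [hj, iff_true, iff_false, not_le] at this <;> omega

theorem image_conjugate_union_image_sub (hlam : AntitoneOn lam (Set.Icc 1 K))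
    (hi : i ∈ Icc 1 K) :
    ((Icc 1 (lam i)).image fun j => (conjugate K lam j : ℤ) - j + 1) ∪
      ((Icc i K).image fun t : ℕ => (t : ℤ) - lam t) = Icc ((i : ℤ) - lam i) K := by
  have hi' := mem_Icc.1 hi
  refine eq_of_subset_of_card_le (fun a ha => ?_) ?_
  · simp only [mem_union, mem_image, mem_Icc] at ha ⊢
    rcases ha with ⟨j, hj, rfl⟩ | ⟨t, ht, rfl⟩
    · have := (le_conjugate_iff hlam (j := j) hi).2 hj.2
      have := conjugate_le (K := K) (lam := lam) j
      omega
    · have := hlam (Set.mem_Icc.2 hi') ⟨hi'.1.trans ht.1, ht.2⟩ ht.1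
      omega
  · rw [card_union_of_disjoint (disjoint_image_conjugate_image_sub hlam hi'.1),
      card_image_of_injective _ strictAnti_conjugate_sub_add_one.injective,
      card_image_of_injOn (injOn_id_sub hlam hi'.1), Int.card_Icc, Nat.card_Icc, Nat.card_Icc]
    omega

theorem prod_conjugate_mul_prod_sub {M : Type*} [CommMonoid M] (f : ℤ → M)
    (hlam : AntitoneOn lam (Set.Icc 1 K)) (hi : i ∈ Icc 1 K) :
    (∏ j ∈ Icc 1 (lam i), f ((conjugate K lam j : ℤ) - j + 1)) *
        ∏ t ∈ Icc i K, f ((t : ℤ) - lam t) =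
      ∏ a ∈ Icc ((i : ℤ) - lam i) K, f a := by
  have hi' := (mem_Icc.1 hi).1
  rw [← image_conjugate_union_image_sub hlam hi,
    prod_union (disjoint_image_conjugate_image_sub hlam hi'),
    prod_image strictAnti_conjugate_sub_add_one.injective.injOn,
    prod_image (injOn_id_sub hlam hi')]

theorem prod_add_conjugate_eq_Gamma_div_mul_prod_inv {z : ℂ} (hz : ∀ m : ℤ, z ≠ m) (hlam : AntitoneOn lam (Set.Icc 1 K))
    (hi : i ∈ Icc 1 K) :
    ∏ j ∈ Icc 1 (lam i), (z + ((conjugate K lam j : ℤ) - j + 1 : ℤ)) =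
      Complex.Gamma (z + (K + 1 : ℤ)) / Complex.Gamma (z + ((i : ℤ) - lam i : ℤ)) *
        ∏ t ∈ Icc i K, (z + ((t : ℤ) - lam t : ℤ))⁻¹ := by
  have hne : ∏ t ∈ Icc i K, (z + ((t : ℤ) - lam t : ℤ)) ≠ 0 :=
    prod_ne_zero_iff.2 fun t _ h =>
      hz (-((t : ℤ) - lam t)) (by rw [Int.cast_neg]; linear_combination h)
  have hiK : (i : ℤ) - lam i ≤ K + 1 := by simp only [mem_Icc] at hi; omega
  rw [Complex.Gamma_add_int_div_Gamma_add_int hz hiK, Ico_add_one_right_eq_Icc,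
    ← prod_conjugate_mul_prod_sub (fun a => z + a) hlam hi, prod_inv_distrib,
    mul_inv_cancel_right₀ hne]

end rows

theorem interaction_product_half_general (K : ℕ) (lam mu : ℕ → ℕ)
    (hlam_mono : ∀ i j, 1 ≤ i → i ≤ j → lam j ≤ lam i)
    (x : ℂ) (hx : ∀ m : ℤ, x ≠ (m : ℂ)) :
    (∏ i ∈ Finset.Icc 1 K, ∏ j ∈ Finset.Icc 1 (lam i),
        (((((Finset.Icc 1 K).filter fun t => j ≤ lam t).card : ℂ)
            + (mu i : ℂ) - (i : ℂ) - (j : ℂ) + 1 + x))) =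
      (∏ i ∈ Finset.Icc 1 K,
          Complex.Gamma (((mu i : ℂ) - (i : ℂ)) + (K : ℂ) + 1 + x) /
            Complex.Gamma (((mu i : ℂ) - (i : ℂ)) - ((lam i : ℂ) - (i : ℂ)) + x)) *
        ∏ i ∈ Finset.Icc 1 K, ∏ j ∈ Finset.Icc i K,
          (1 / (((mu i : ℂ) - (i : ℂ)) - ((lam j : ℂ) - (j : ℂ)) + x)) := by
  have hlam : AntitoneOn lam (Set.Icc 1 K) := fun a ha _ _ hab => hlam_mono a _ ha.1 hab
  rw [← prod_mul_distrib]
  refine prod_congr rfl fun i hi => ?_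
  have hz : ∀ m : ℤ, (mu i - i + x : ℂ) ≠ m := fun m h =>
    hx (m - mu i + i) (by push_cast; linear_combination h)
  have hrow := prod_add_conjugate_eq_Gamma_div_mul_prod_inv hz hlam hi
  push_cast [conjugate] at hrow
  refine (prod_congr rfl fun j _ => by ring).trans (hrow.trans ?_)
  simp only [one_div]
  congr 1
  · congr 1 <;> congr 1 <;> ring
  · exact prod_congr rfl fun t _ => by ring

/-- Proposition (interaction over one partition): for partitions `λ, μ` of length `≤ K`,
`∏_{(i,j)∈λ} (λ'_j + μ_i − i − j + 1 + x)
 = ∏_{i=1}^{K} Γ(m_i+K+1+x)/Γ(m_i−l_i+x) · ∏_{1≤i≤j≤K} 1/(m_i−l_j+x)`,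
where `l_i = λ_i − i`, `m_i = μ_i − i`, and `x` is generic. -/
theorem interaction_product_half (K : ℕ) (hK : 0 < K) (lam mu : ℕ → ℕ)
    (hlam_mono : ∀ i j, 1 ≤ i → i ≤ j → lam j ≤ lam i)
    (hlam_len : ∀ i, K < i → lam i = 0)
    (hmu_mono : ∀ i j, 1 ≤ i → i ≤ j → mu j ≤ mu i)
    (hmu_len : ∀ i, K < i → mu i = 0)
    (x : ℂ) (hx : ∀ m : ℤ, x ≠ (m : ℂ)) :
    (∏ i ∈ Finset.Icc 1 K, ∏ j ∈ Finset.Icc 1 (lam i),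
        (((((Finset.Icc 1 K).filter fun t => j ≤ lam t).card : ℂ)
            + (mu i : ℂ) - (i : ℂ) - (j : ℂ) + 1 + x))) =
      (∏ i ∈ Finset.Icc 1 K,
          Complex.Gamma (((mu i : ℂ) - (i : ℂ)) + (K : ℂ) + 1 + x) /
            Complex.Gamma (((mu i : ℂ) - (i : ℂ)) - ((lam i : ℂ) - (i : ℂ)) + x)) *
        ∏ i ∈ Finset.Icc 1 K, ∏ j ∈ Finset.Icc i K,
          (1 / (((mu i : ℂ) - (i : ℂ)) - ((lam j : ℂ) - (j : ℂ)) + x)) :=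
  interaction_product_half_general K lam mu hlam_mono x hx
end

section
/- Let λ and μ be partitions with ℓ(λ) ≤ K and ℓ(μ) ≤ K, and x a complex number with all terms defined and nonzero. Then 1/(∏_{(i,j)∈λ}(λ'_j+μ_i−i−j+1+x)² · ∏_{(i,j)∈μ}(μ'_j+λ_i−i−j+1−x)²) = ∏_{i=1}^{K} [Γ(x)²Γ(1−x)² / (Γ(m_i+K+1+x)² Γ(l_i+K+1−x)²)] · ∏_{i,j=1}^{K} (m_i − l_j + x)². -/
/-!
For a partition `λ` with at most `K` parts and `1 ≤ r ≤ K`, the particles `λ_i - i` (`r ≤ i ≤ K`)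
and the holes `j - 1 - λ'_j` (`1 ≤ j ≤ λ_r`) of its Maya diagram partition the integer interval
`[-K, λ_r - r]`. Hence the box product over row `r` of `λ`, a product of `a - (j - 1 - λ'_j)`, is
a product of `a - v` over that interval (a ratio of Gamma values) divided by the particle factors
`∏_{k ≥ r} (a - l_k)`. Taking `a = m_i + x` on the rows of `λ` and `a = l_i - x` on those of `μ`,
the particle factors of the two rows `i` give the entries `(i, j)`, `j ≥ i`, and `(j, i)`, `j > i`,
of the double product `∏ (m_i - l_j + x)`, plus one more diagonal factor `z = m_i - l_i + x`; and
`z Γ(z) Γ(-z) = -Γ(z) Γ(1 - z)` equals `±Γ(x) Γ(1 - x)` by the reflection formula, as `z - x ∈ ℤ`.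
-/

open Finset Complex

/-- `λ'_j`, counting only the parts `lam 1, …, lam K`. -/
def colLen (K : ℕ) (lam : ℕ → ℕ) (j : ℕ) : ℕ := #{t ∈ Icc 1 K | j ≤ lam t}

section Maya

variable {K : ℕ} {lam : ℕ → ℕ}

theorem colLen_le (j : ℕ) : colLen K lam j ≤ K := by
  simpa [colLen] using card_filter_le (Icc 1 K) (j ≤ lam ·)

theorem colLen_antitone : Antitone (colLen K lam) := fun _ _ hjj' =>
  card_le_card fun _ ht => by
    simp only [mem_filter] at ht ⊢
    exact ⟨ht.1, hjj'.trans ht.2⟩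

theorem strictMono_sub_colLen : StrictMono (fun j : ℕ => (j : ℤ) - 1 - colLen K lam j) :=
  fun j j' hjj' => by
    have := colLen_antitone (K := K) (lam := lam) hjj'.le
    dsimp only
    omega

theorem le_colLen (hmono : ∀ i j, 1 ≤ i → i ≤ j → lam j ≤ lam i) {i j : ℕ} (hiK : i ≤ K)
    (hj : j ≤ lam i) : i ≤ colLen K lam j := by
  simpa [colLen] using card_le_card (s := Icc 1 i) fun t ht => by
    simp only [mem_Icc, mem_filter] at ht ⊢
    exact ⟨⟨ht.1, ht.2.trans hiK⟩, hj.trans (hmono t i ht.1 ht.2)⟩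

theorem colLen_lt (hmono : ∀ i j, 1 ≤ i → i ≤ j → lam j ≤ lam i) {i j : ℕ} (hi : 1 ≤ i)
    (hj : lam i < j) : colLen K lam j < i := by
  have := card_le_card (t := Icc 1 (i - 1)) (s := {t ∈ Icc 1 K | j ≤ lam t}) fun t ht => by
    simp only [mem_Icc, mem_filter] at ht ⊢
    have := fun h => hmono i t hi h
    omega
  simp only [Nat.card_Icc] at this
  exact lt_of_le_of_lt this (by omega)

theorem strictAntiOn_sub (hmono : ∀ i j, 1 ≤ i → i ≤ j → lam j ≤ lam i) :
    StrictAntiOn (fun i => (lam i : ℤ) - i) (Set.Ici 1) :=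
  fun i hi i' _ hii' => by
    have := hmono i i' hi hii'.le
    dsimp only
    omega

theorem injOn_sub (hmono : ∀ i j, 1 ≤ i → i ≤ j → lam j ≤ lam i) {r : ℕ} (hr : 1 ≤ r) :
    Set.InjOn (fun i => (lam i : ℤ) - i) (Icc r K) :=
  (strictAntiOn_sub hmono).injOn.mono fun i hi => by
    simp only [coe_Icc, Set.mem_Icc, Set.mem_Ici] at hi ⊢
    omega

theorem disjoint_image_sub_image_sub_colLen (hmono : ∀ i j, 1 ≤ i → i ≤ j → lam j ≤ lam i)
    {r : ℕ} (hr : 1 ≤ r) :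
    Disjoint ((Icc r K).image fun i => (lam i : ℤ) - i)
      ((Icc 1 (lam r)).image fun j : ℕ => (j : ℤ) - 1 - colLen K lam j) := by
  simp only [disjoint_left, mem_image, mem_Icc, not_exists, not_and]
  rintro _ ⟨i, ⟨hri, hiK⟩, rfl⟩ j ⟨hj, -⟩
  rcases le_or_gt j (lam i) with hji | hij
  · have := le_colLen hmono hiK hji
    omega
  · have := colLen_lt hmono (hr.trans hri) hij (K := K)
    omega

theorem image_sub_union_image_sub_colLen (hmono : ∀ i j, 1 ≤ i → i ≤ j → lam j ≤ lam i)
    {r : ℕ} (hr : 1 ≤ r) (hrK : r ≤ K) :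
    (Icc r K).image (fun i => (lam i : ℤ) - i) ∪
        (Icc 1 (lam r)).image (fun j : ℕ => (j : ℤ) - 1 - colLen K lam j)
      = Icc (-(K : ℤ)) (lam r - r) := by
  refine eq_of_subset_of_card_le (fun v hv => ?_) ?_
  · simp only [mem_union, mem_image, mem_Icc] at hv ⊢
    rcases hv with ⟨i, ⟨hri, hiK⟩, rfl⟩ | ⟨j, ⟨hj, hjr⟩, rfl⟩
    · have := hmono r i hr hri
      omega
    · have := colLen_le (K := K) (lam := lam) j
      have := le_colLen hmono hrK hjr
      omega
  · rw [card_union_of_disjoint (disjoint_image_sub_image_sub_colLen hmono hr),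
      card_image_of_injOn (injOn_sub hmono hr),
      card_image_of_injective _ strictMono_sub_colLen.injective]
    simp only [Int.card_Icc, Nat.card_Icc]
    omega

theorem prod_Icc_eq_prod_sub_mul_prod_sub_colLen {M : Type*} [CommMonoid M]
    (hmono : ∀ i j, 1 ≤ i → i ≤ j → lam j ≤ lam i) (g : ℤ → M) {r : ℕ}
    (hr : 1 ≤ r) (hrK : r ≤ K) :
    ∏ v ∈ Icc (-(K : ℤ)) (lam r - r), g v
      = (∏ i ∈ Icc r K, g (lam i - i)) * ∏ j ∈ Icc 1 (lam r), g (j - 1 - colLen K lam j) := by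
  rw [← image_sub_union_image_sub_colLen hmono hr hrK,
    prod_union (disjoint_image_sub_image_sub_colLen hmono hr),
    prod_image (injOn_sub hmono hr), prod_image strictMono_sub_colLen.injective.injOn]

end Maya

theorem prod_Icc_sub_mul_Gamma (w : ℂ) (hw : ∀ m : ℤ, w ≠ m) {a b : ℤ} (hab : a ≤ b + 1) :
    (∏ v ∈ Icc a b, (w - v)) * Gamma (w - b) = Gamma (w - a + 1) := by
  obtain ⟨n, rfl⟩ : ∃ n : ℕ, b = a - 1 + n := ⟨(b - a + 1).toNat, by omega⟩
  induction n with
  | zero => simp [sub_add]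
  | succ n ih =>
    have hIcc : Icc a (a - 1 + (n + 1 : ℕ))
        = insert (a - 1 + (n + 1 : ℕ)) (Icc a (a - 1 + n)) := by
      ext v
      simp only [mem_Icc, mem_insert]
      omega
    have hne : w - ((a - 1 + (n + 1 : ℕ) : ℤ) : ℂ) ≠ 0 := sub_ne_zero.mpr (hw _)
    rw [hIcc, prod_insert (by simp), ← ih (by omega), mul_comm (w - _), mul_assoc,
      ← Gamma_add_one _ hne]
    push_cast
    ring_nf

theorem sq_Gamma_mul_Gamma_one_sub_add_int (x : ℂ) (d : ℤ) :
    (Gamma (x + d) * Gamma (1 - (x + d))) ^ 2 = (Gamma x * Gamma (1 - x)) ^ 2 := by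
  rw [Gamma_mul_Gamma_one_sub, Gamma_mul_Gamma_one_sub, mul_add, mul_comm (Real.pi : ℂ) d,
    sin_antiperiodic.add_int_mul_eq, div_pow, div_pow, mul_pow, ← Int.cast_pow,
    ← Units.val_pow_eq_pow_val, Int.units_sq, Units.val_one, Int.cast_one, one_mul]

theorem prod_Icc_prod_Icc_eq_prod_triangle {M : Type*} [CommMonoid M] (f : ℕ → ℕ → M) (n : ℕ) :
    ∏ i ∈ Icc 1 n, ∏ j ∈ Icc 1 n, f i j
      = ∏ i ∈ Icc 1 n, ((∏ j ∈ Icc i n, f i j) * ∏ j ∈ Ioc i n, f j i) := by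
  have hswap : ∏ i ∈ Icc 1 n, ∏ j ∈ Ioc i n, f j i = ∏ j ∈ Icc 1 n, ∏ i ∈ Ico 1 j, f j i :=
    prod_comm' fun i j => by simp only [mem_Icc, mem_Ioc, mem_Ico]; omega
  rw [prod_mul_distrib, hswap, ← prod_mul_distrib]
  refine prod_congr rfl fun i hi => ?_
  have hsplit : Icc 1 n = Icc i n ∪ Ico 1 i := by
    ext j
    simp only [mem_Icc, mem_union, mem_Ico] at hi ⊢
    omega
  rw [hsplit, prod_union (disjoint_left.mpr fun j => by simp only [mem_Icc, mem_Ico]; omega)]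

theorem inv_eq_div_mul_of_mul_mul_eq {α : Type*} [Field α] {a b c d : α} (h : a * b * c = d)
    (hd : d ≠ 0) : a⁻¹ = c / d * b := by
  subst h
  have ha := left_ne_zero_of_mul (left_ne_zero_of_mul hd)
  have hb := right_ne_zero_of_mul (left_ne_zero_of_mul hd)
  have hc := right_ne_zero_of_mul hd
  field_simp

theorem prod_row_mul_prod_mul_Gamma {K : ℕ} {lam : ℕ → ℕ}
    (hmono : ∀ i j, 1 ≤ i → i ≤ j → lam j ≤ lam i) {r : ℕ} (hr : 1 ≤ r) (hrK : r ≤ K)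
    (a : ℂ) (ha : ∀ m : ℤ, a ≠ m) :
    (∏ j ∈ Icc 1 (lam r), ((colLen K lam j : ℂ) - j + 1 + a)) *
        (∏ i ∈ Icc r K, (a - ((lam i : ℂ) - i))) * Gamma (a - ((lam r : ℂ) - r))
      = Gamma (a + K + 1) := by
  have hmaya := prod_Icc_eq_prod_sub_mul_prod_sub_colLen hmono (fun v : ℤ => a - v) hr hrK
  push_cast at hmaya
  have hGamma := prod_Icc_sub_mul_Gamma a ha (a := -(K : ℤ)) (b := lam r - r) (by omega)
  rw [Int.cast_neg, Int.cast_natCast, sub_neg_eq_add, hmaya] at hGamma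
  push_cast at hGamma
  rw [← hGamma, mul_comm (∏ j ∈ _, _)]
  congr 2
  exact prod_congr rfl fun j _ => by ring

theorem row_identity {K : ℕ} {lam mu : ℕ → ℕ}
    (hlam : ∀ i j, 1 ≤ i → i ≤ j → lam j ≤ lam i) (hmu : ∀ i j, 1 ≤ i → i ≤ j → mu j ≤ mu i)
    {x : ℂ} (hx : ∀ m : ℤ, x ≠ m) {i : ℕ} (hi : 1 ≤ i) (hiK : i ≤ K) :
    (∏ j ∈ Icc 1 (lam i), ((colLen K lam j : ℂ) + mu i - i - j + 1 + x) ^ 2) *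
        (∏ j ∈ Icc 1 (mu i), ((colLen K mu j : ℂ) + lam i - i - j + 1 - x) ^ 2) *
        ((∏ j ∈ Icc i K, ((mu i - i : ℂ) - (lam j - j) + x) ^ 2) *
          ∏ j ∈ Ioc i K, ((mu j - j : ℂ) - (lam i - i) + x) ^ 2) *
        (Gamma x ^ 2 * Gamma (1 - x) ^ 2)
      = Gamma ((mu i - i : ℂ) + K + 1 + x) ^ 2 * Gamma ((lam i - i : ℂ) + K + 1 - x) ^ 2 := by
  set d : ℤ := (mu i - i) - (lam i - i)
  have hd : (d : ℂ) = (mu i - i : ℂ) - (lam i - i) := by push_cast [d]; ring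
  have hlamRow := prod_row_mul_prod_mul_Gamma hlam hi hiK ((mu i - i : ℂ) + x)
    fun m h => hx (m - (mu i - i)) (by push_cast; linear_combination h)
  have hmuRow := prod_row_mul_prod_mul_Gamma hmu hi hiK ((lam i - i : ℂ) - x)
    fun m h => hx (lam i - i - m) (by push_cast; linear_combination -h)
  have hlamArg : (mu i - i : ℂ) + x - (lam i - i) = x + d := by rw [hd]; ring
  have hmuArg : (lam i - i : ℂ) - x - (mu i - i) = -(x + d) := by rw [hd]; ring
  rw [hlamArg, add_right_comm _ x, add_right_comm _ x] at hlamRow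
  rw [hmuArg, sub_add_eq_add_sub _ x, sub_add_eq_add_sub _ x] at hmuRow
  have hGamma_one_sub : Gamma (1 - (x + d)) = -(x + d) * Gamma (-(x + d)) := by
    rw [← Gamma_add_one _ fun h => hx (-d) (by push_cast; linear_combination -h),
      neg_add_eq_sub]
  have hdiag : ∏ j ∈ Icc i K, ((lam i - i : ℂ) - x - (mu j - j)) ^ 2
      = (x + d) ^ 2 * ∏ j ∈ Ioc i K, ((mu j - j : ℂ) - (lam i - i) + x) ^ 2 := by
    rw [Icc_eq_cons_Ioc hiK, prod_cons, hd]
    congr 1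
    · ring
    · exact prod_congr rfl fun _ _ => by ring
  have hlamBoxes : ∏ j ∈ Icc 1 (lam i), ((colLen K lam j : ℂ) - j + 1 + ((mu i - i : ℂ) + x)) ^ 2
      = ∏ j ∈ Icc 1 (lam i), ((colLen K lam j : ℂ) + mu i - i - j + 1 + x) ^ 2 :=
    prod_congr rfl fun _ _ => by ring
  have hmuBoxes : ∏ j ∈ Icc 1 (mu i), ((colLen K mu j : ℂ) - j + 1 + ((lam i - i : ℂ) - x)) ^ 2
      = ∏ j ∈ Icc 1 (mu i), ((colLen K mu j : ℂ) + lam i - i - j + 1 - x) ^ 2 :=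
    prod_congr rfl fun _ _ => by ring
  have hdoubleRow : ∏ j ∈ Icc i K, ((mu i - i : ℂ) + x - (lam j - j)) ^ 2
      = ∏ j ∈ Icc i K, ((mu i - i : ℂ) - (lam j - j) + x) ^ 2 :=
    prod_congr rfl fun _ _ => by ring
  rw [← hlamRow, ← hmuRow, ← mul_pow (Gamma x), ← sq_Gamma_mul_Gamma_one_sub_add_int x d,
    hGamma_one_sub]
  simp only [mul_pow, ← prod_pow, hdiag, hlamBoxes, hmuBoxes, hdoubleRow]
  ring

theorem full_interaction_general (K : ℕ) (lam mu : ℕ → ℕ)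
    (hlam_mono : ∀ i j, 1 ≤ i → i ≤ j → lam j ≤ lam i)
    (hmu_mono : ∀ i j, 1 ≤ i → i ≤ j → mu j ≤ mu i)
    (x : ℂ) (hx : ∀ m : ℤ, x ≠ (m : ℂ)) :
    ((∏ i ∈ Finset.Icc 1 K, ∏ j ∈ Finset.Icc 1 (lam i),
        (((((Finset.Icc 1 K).filter fun t => j ≤ lam t).card : ℂ)
            + (mu i : ℂ) - (i : ℂ) - (j : ℂ) + 1 + x)) ^ 2) *
      ∏ i ∈ Finset.Icc 1 K, ∏ j ∈ Finset.Icc 1 (mu i),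
        (((((Finset.Icc 1 K).filter fun t => j ≤ mu t).card : ℂ)
            + (lam i : ℂ) - (i : ℂ) - (j : ℂ) + 1 - x)) ^ 2)⁻¹ =
      (∏ i ∈ Finset.Icc 1 K,
          (Complex.Gamma x ^ 2 * Complex.Gamma (1 - x) ^ 2) /
            (Complex.Gamma (((mu i : ℂ) - (i : ℂ)) + (K : ℂ) + 1 + x) ^ 2 *
              Complex.Gamma (((lam i : ℂ) - (i : ℂ)) + (K : ℂ) + 1 - x) ^ 2)) *
        ∏ i ∈ Finset.Icc 1 K, ∏ j ∈ Finset.Icc 1 K,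
          (((mu i : ℂ) - (i : ℂ)) - ((lam j : ℂ) - (j : ℂ)) + x) ^ 2 := by
  have hrows := prod_congr rfl fun i (hi : i ∈ Icc 1 K) =>
    row_identity hlam_mono hmu_mono hx (mem_Icc.mp hi).1 (mem_Icc.mp hi).2
  rw [prod_mul_distrib, prod_mul_distrib, prod_mul_distrib,
    ← prod_Icc_prod_Icc_eq_prod_triangle] at hrows
  have hGamma : ∏ i ∈ Icc 1 K, (Gamma ((mu i - i : ℂ) + K + 1 + x) ^ 2 *
      Gamma ((lam i - i : ℂ) + K + 1 - x) ^ 2) ≠ 0 :=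
    prod_ne_zero_iff.mpr fun i _ => mul_ne_zero
      (pow_ne_zero 2 (Gamma_ne_zero fun m h => hx (-m - mu i + i - K - 1)
        (by push_cast; linear_combination h)))
      (pow_ne_zero 2 (Gamma_ne_zero fun m h => hx (m + lam i - i + K + 1)
        (by push_cast; linear_combination -h)))
  rw [prod_div_distrib]
  exact inv_eq_div_mul_of_mul_mul_eq hrows hGamma

/-- Full interaction formula: for partitions `λ, μ` of length `≤ K` and generic `x`,
`1/(∏_{(i,j)∈λ}(λ'_j+μ_i−i−j+1+x)² · ∏_{(i,j)∈μ}(μ'_j+λ_i−i−j+1−x)²)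
 = ∏_{i=1}^{K} Γ(x)²Γ(1−x)²/(Γ(m_i+K+1+x)²Γ(l_i+K+1−x)²) · ∏_{i,j=1}^{K}(m_i−l_j+x)²`. -/
theorem full_interaction (K : ℕ) (hK : 0 < K) (lam mu : ℕ → ℕ)
    (hlam_mono : ∀ i j, 1 ≤ i → i ≤ j → lam j ≤ lam i)
    (hlam_len : ∀ i, K < i → lam i = 0)
    (hmu_mono : ∀ i j, 1 ≤ i → i ≤ j → mu j ≤ mu i)
    (hmu_len : ∀ i, K < i → mu i = 0)
    (x : ℂ) (hx : ∀ m : ℤ, x ≠ (m : ℂ)) :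
    ((∏ i ∈ Finset.Icc 1 K, ∏ j ∈ Finset.Icc 1 (lam i),
        (((((Finset.Icc 1 K).filter fun t => j ≤ lam t).card : ℂ)
            + (mu i : ℂ) - (i : ℂ) - (j : ℂ) + 1 + x)) ^ 2) *
      ∏ i ∈ Finset.Icc 1 K, ∏ j ∈ Finset.Icc 1 (mu i),
        (((((Finset.Icc 1 K).filter fun t => j ≤ mu t).card : ℂ)
            + (lam i : ℂ) - (i : ℂ) - (j : ℂ) + 1 - x)) ^ 2)⁻¹ =
      (∏ i ∈ Finset.Icc 1 K,
          (Complex.Gamma x ^ 2 * Complex.Gamma (1 - x) ^ 2) /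
            (Complex.Gamma (((mu i : ℂ) - (i : ℂ)) + (K : ℂ) + 1 + x) ^ 2 *
              Complex.Gamma (((lam i : ℂ) - (i : ℂ)) + (K : ℂ) + 1 - x) ^ 2)) *
        ∏ i ∈ Finset.Icc 1 K, ∏ j ∈ Finset.Icc 1 K,
          (((mu i : ℂ) - (i : ℂ)) - ((lam j : ℂ) - (j : ℂ)) + x) ^ 2 :=
  full_interaction_general K lam mu hlam_mono hmu_mono x hx
end

section
/- Let σ be a complex number that is not half an integer, K a positive integer, and let λ, μ be partitions with ℓ(λ) ≤ K and ℓ(μ) ≤ K. Define v_σ(z) = 1/(Γ(z+1+σ)²Γ(z+1−σ)²), and set x_i = λ_i − i + K − σ, x_{K+i} = μ_i − i + K + σ for 1 ≤ i ≤ K. Then the bare conformal block coefficient B_{λ,μ}([];σ) := ∏_{(i,j)∈λ} 1/(h_λ(i,j)²(λ'_j+μ_i−i−j+1+2σ)²) · ∏_{(i,j)∈μ} 1/(h_μ(i,j)²(λ_i+μ'_j−i−j+1−2σ)²) equals Γ(2σ)^{2K} Γ(1−2σ)^{2K} · ∏_{1≤i<j≤2K}(x_i−x_j)² · ∏_{i=1}^{2K}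 v_σ(x_i). -/
/-!
Index rows from `0` and put `ν a = λ_{a+1} + K - 1 - a`, `m a = μ_{a+1} + K - 1 - a`, so that
`x_a = ν a - σ` and `x_{K+a} = m a + σ`. In the Maya diagram of `λ`, the holes `K + j - λ'_{j+1}`
with `j < λ_{a+1}` and the particles `ν b` with `a < b < K` fill `{0, …, ν a - 1}` exactly once.
Multiplying `ν a - v`, resp. `v - (m a + 2σ)`, over this set shows that the hook lengths of row `a`
times the Vandermonde factors `ν a - ν b` give `(ν a)!`, and that the cross factors times the mixed
Vandermonde factors give `∏_{v < ν a} (v - m a - 2σ)`; likewise with `λ` and `μ` exchanged. The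
Pochhammer identity `(-m-s)_n (s-n)_{m+1} = (1-s)_n (s)_{m+1}` turns the two cross products into
`Γ(ν a + 1 - 2σ) Γ(m a + 1 + 2σ) / (Γ(1 - 2σ) Γ(2σ))`. The theorem then holds row by row, up to
signs that disappear on squaring.
-/

open Finset
open scoped Nat

section Pochhammer

variable {R : Type*} [CommRing R]

theorem prod_range_natCast_sub_eq_factorial (n : ℕ) : ∏ v ∈ range n, ((n : R) - v) = n ! := by
  rw [← Nat.descFactorial_self, Nat.descFactorial_eq_prod_range, Nat.cast_prod]
  exact prod_congr rfl fun v hv => by rw [Nat.cast_sub (mem_range.1 hv).le]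

theorem prod_range_sub_mul_prod_range_sub (s : R) (m : ℕ) : ∀ n : ℕ,
    (∏ v ∈ range n, ((v : R) - (m + s))) * ∏ v ∈ range (m + 1), ((v : R) - (n - s)) =
      (∏ v ∈ range n, (1 - s + v)) * ∏ v ∈ range (m + 1), (s + v)
  | 0 => by simp only [range_zero, prod_empty, Nat.cast_zero, zero_sub, sub_neg_eq_add, add_comm]
  | n + 1 => by
    have ih := prod_range_sub_mul_prod_range_sub s m n
    have hshift : ∏ v ∈ range (m + 1), ((v : R) - ((n + 1 : ℕ) - s)) =
        (∏ v ∈ range m, ((v : R) - (n - s))) * (s - (n + 1)) := by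
      rw [prod_range_succ']
      congr 1
      · exact prod_congr rfl fun v _ => by push_cast; ring
      · push_cast; ring
    rw [prod_range_succ] at ih
    rw [hshift, prod_range_succ, prod_range_succ (fun v : ℕ => 1 - s + (v : R))]
    -- `(n - (m + s)) (s - (n + 1)) = (m - (n - s)) (1 - s + n)`
    linear_combination (1 - s + n) * ih

end Pochhammer

theorem ascPochhammer_eval_eq_prod_range {S : Type*} [CommSemiring S] (z : S) (n : ℕ) :
    (ascPochhammer S n).eval z = ∏ v ∈ range n, (z + v) := by
  induction n with
  | zero => simp
  | succ n ih => rw [ascPochhammer_succ_eval, ih, prod_range_succ]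

theorem Complex.Gamma_add_nat_eq_mul_prod {z : ℂ} (hz : ∀ k : ℕ, z ≠ -k) (n : ℕ) :
    Complex.Gamma (z + n) = Complex.Gamma z * ∏ v ∈ range n, (z + v) := by
  rw [← ascPochhammer_eval_eq_prod_range, ← Complex.Gamma_add_nat_div_Gamma_eq z hz,
    mul_div_cancel₀ _ (Complex.Gamma_ne_zero hz)]

theorem prod_range_add_natCast_ne_zero {z : ℂ} (hz : ∀ k : ℕ, z ≠ -k) (n : ℕ) :
    ∏ v ∈ range n, (z + v) ≠ 0 :=
  prod_ne_zero_iff.2 fun v _ h => hz v (eq_neg_of_add_eq_zero_left h)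

theorem one_div_Gamma_sq_mul_one_div_Gamma_sq {σ : ℂ} (hs₀ : ∀ k : ℕ, 2 * σ ≠ -k)
    (hs₁ : ∀ k : ℕ, 1 - 2 * σ ≠ -k) (n m : ℕ) :
    1 / (Complex.Gamma (n - σ + 1 + σ) ^ 2 * Complex.Gamma (n - σ + 1 - σ) ^ 2) *
        (1 / (Complex.Gamma (m + σ + 1 + σ) ^ 2 * Complex.Gamma (m + σ + 1 - σ) ^ 2)) =
      ((Complex.Gamma (2 * σ) * Complex.Gamma (1 - 2 * σ) * (n ! * m ! *
        ((∏ v ∈ range n, (1 - 2 * σ + v)) * ∏ v ∈ range (m + 1), (2 * σ + v)))) ^ 2)⁻¹ := by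
  have hn : Complex.Gamma (n - σ + 1 + σ) = n ! := by
    rw [← Complex.Gamma_nat_eq_factorial]
    ring_nf
  have hn' : Complex.Gamma (n - σ + 1 - σ) =
      Complex.Gamma (1 - 2 * σ) * ∏ v ∈ range n, (1 - 2 * σ + v) := by
    rw [← Complex.Gamma_add_nat_eq_mul_prod hs₁]
    ring_nf
  have hm : Complex.Gamma (m + σ + 1 + σ) =
      Complex.Gamma (2 * σ) * ∏ v ∈ range (m + 1), (2 * σ + v) := by
    rw [← Complex.Gamma_add_nat_eq_mul_prod hs₀]
    push_cast
    ring_nf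
  have hm' : Complex.Gamma (m + σ + 1 - σ) = m ! := by
    rw [← Complex.Gamma_nat_eq_factorial]
    ring_nf
  rw [hn, hn', hm, hm']
  ring

theorem prod_Icc_one_eq_prod_range {M : Type*} [CommMonoid M] (n : ℕ) (F : ℕ → M) :
    ∏ i ∈ Icc 1 n, F i = ∏ a ∈ range n, F (a + 1) := by
  rw [range_eq_Ico, prod_Ico_add' F 0 n 1, zero_add, Ico_add_one_right_eq_Icc]

section PairProducts

variable {M : Type*} [CommMonoid M]

theorem Fin.prod_prod_filter_lt_eq_prod_range_prod_Ico (n : ℕ) (G : ℕ → ℕ → M) :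
    ∏ i : Fin n, ∏ j ∈ univ.filter (fun j : Fin n => i < j), G i j =
      ∏ a ∈ range n, ∏ b ∈ Ico (a + 1) n, G a b := by
  rw [← Fin.prod_univ_eq_prod_range (fun a => ∏ b ∈ Ico (a + 1) n, G a b)]
  refine prod_congr rfl fun i _ => ?_
  rw [filter_lt_eq_Ioi, Ico_add_one_left_eq_Ioo, ← Fin.map_valEmbedding_Ioi, prod_map]
  rfl

theorem prod_range_prod_Ico_add (m n : ℕ) (G : ℕ → ℕ → M) :
    ∏ a ∈ range (m + n), ∏ b ∈ Ico (a + 1) (m + n), G a b =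
      (∏ a ∈ range m, ∏ b ∈ Ico (a + 1) m, G a b) * (∏ a ∈ range m, ∏ b ∈ range n, G a (m + b)) *
        ∏ a ∈ range n, ∏ b ∈ Ico (a + 1) n, G (m + a) (m + b) := by
  rw [prod_range_add, ← prod_mul_distrib]
  congr 1
  · refine prod_congr rfl fun a ha => ?_
    rw [← prod_Ico_consecutive _ (mem_range.1 ha) (Nat.le_add_right m n),
      prod_Ico_eq_prod_range (G a) m, Nat.add_sub_cancel_left]
  · refine prod_congr rfl fun a _ => ?_
    rw [prod_Ico_eq_prod_range, prod_Ico_eq_prod_range]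
    refine prod_congr (by congr 1; omega) fun k _ => ?_
    congr 1
    omega

theorem prod_range_prod_range_eq_prod_mul_prod_Ico (n : ℕ) (H : ℕ → ℕ → M) :
    ∏ a ∈ range n, ∏ b ∈ range n, H a b =
      ∏ a ∈ range n, (H a a * ∏ b ∈ Ico (a + 1) n, H a b * H b a) := by
  induction n with
  | zero => simp
  | succ n ih =>
    have hrow : ∀ a ∈ range n, H a a * ∏ b ∈ Ico (a + 1) (n + 1), H a b * H b a =
        (H a a * ∏ b ∈ Ico (a + 1) n, H a b * H b a) * (H a n * H n a) := fun a ha => by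
      rw [prod_Ico_succ_top (mem_range.1 ha), mul_assoc]
    rw [prod_range_succ (fun a => H a a * ∏ b ∈ Ico (a + 1) (n + 1), H a b * H b a),
      prod_congr rfl hrow, prod_mul_distrib, ← ih, Ico_self, prod_empty, mul_one]
    simp only [prod_range_succ, prod_mul_distrib]
    ac_rfl

end PairProducts

theorem prod_sq_sub_of_eq_ite {R : Type*} [CommRing R] {K : ℕ} {x : Fin (2 * K) → R} {u w : ℕ → R}
    (hx : ∀ i : Fin (2 * K), x i = if (i : ℕ) < K then u i else w (i - K)) :
    ∏ i, ∏ j ∈ univ.filter (fun j => i < j), (x i - x j) ^ 2 =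
      ∏ a ∈ range K, ((∏ b ∈ Ico (a + 1) K,
        (u a - u b) * (w a - w b) * (u a - w b) * (u b - w a)) * (u a - w a)) ^ 2 := by
  set y : ℕ → R := fun a => if a < K then u a else w (a - K)
  have hyu : ∀ a < K, y a = u a := fun a ha => if_pos ha
  have hyw : ∀ a, y (K + a) = w a := fun a => by simp [y]
  calc ∏ i, ∏ j ∈ univ.filter (fun j => i < j), (x i - x j) ^ 2
      = ∏ a ∈ range (K + K), ∏ b ∈ Ico (a + 1) (K + K), (y a - y b) ^ 2 := by
        rw [← two_mul, ← Fin.prod_prod_filter_lt_eq_prod_range_prod_Ico]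
        simp only [hx, y]
    _ = _ := by
      rw [prod_range_prod_Ico_add, prod_range_prod_range_eq_prod_mul_prod_Ico]
      rw [← prod_mul_distrib, ← prod_mul_distrib]
      refine prod_congr rfl fun a ha => ?_
      have hyu' : ∀ b ∈ Ico (a + 1) K, y b = u b := fun b hb => hyu b (mem_Ico.1 hb).2
      have hAA : ∏ b ∈ Ico (a + 1) K, (y a - y b) ^ 2 = ∏ b ∈ Ico (a + 1) K, (u a - u b) ^ 2 :=
        prod_congr rfl fun b hb => by rw [hyu a (mem_range.1 ha), hyu' b hb]
      have hAB : ∏ b ∈ Ico (a + 1) K, (y a - y (K + b)) ^ 2 * (y b - y (K + a)) ^ 2 =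
          ∏ b ∈ Ico (a + 1) K, (u a - w b) ^ 2 * (u b - w a) ^ 2 :=
        prod_congr rfl fun b hb => by rw [hyu a (mem_range.1 ha), hyu' b hb, hyw, hyw]
      rw [hAA, hAB, hyu a (mem_range.1 ha)]
      simp only [hyw, mul_pow, prod_mul_distrib, prod_pow]
      ring

theorem prod_fin_two_mul_of_eq_ite {α M : Type*} [CommMonoid M] {K : ℕ} {x : Fin (2 * K) → α}
    {u w : ℕ → α} (hx : ∀ i : Fin (2 * K), x i = if (i : ℕ) < K then u i else w (i - K))
    (F : α → M) : ∏ i, F (x i) = ∏ a ∈ range K, F (u a) * F (w a) := by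
  simp only [hx]
  rw [Fin.prod_univ_eq_prod_range (fun a => F (if a < K then u a else w (a - K))), two_mul,
    prod_range_add, ← prod_mul_distrib]
  refine prod_congr rfl fun a ha => ?_
  rw [if_pos (mem_range.1 ha), if_neg (by omega), Nat.add_sub_cancel_left]

namespace MayaDiagram

variable {R : Type*} [CommRing R] (K : ℕ) (f : ℕ → ℕ)

-- A partition with at most `K` parts is encoded by the antitone `f` with `f a = λ_{a+1}`: rows
-- are indexed from `0`. Then `conj K f j = λ'_{j+1}`, and `particle K f` and `hole K f` enumerate
-- the two complementary halves of the Maya diagram of `λ`, shifted by `K`.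
def conj (j : ℕ) : ℕ := #{a ∈ range K | j < f a}

def particle (a : ℕ) : ℕ := f a + (K - 1 - a)

def hole (j : ℕ) : ℕ := K - conj K f j + j

-- With `i = a + 1` and `g a = μ_{a+1}`, the factors are `h_λ(i, j + 1)` and
-- `-(λ'_{j+1} + μ_i - i - (j + 1) + 1 + s)`.
def hookCross (g : ℕ → ℕ) (s : R) (a : ℕ) : R :=
  ∏ j ∈ range (f a),
    (((particle K f a : R) - hole K f j) * ((hole K f j : R) - (particle K g a + s)))

variable {K f}

theorem conj_le (j : ℕ) : conj K f j ≤ K :=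
  (card_filter_le _ _).trans_eq (card_range K)

theorem conj_antitone : Antitone (conj K f) := fun _ _ h =>
  card_le_card (monotone_filter_right _ fun _ _ ha => h.trans_lt ha)

theorem lt_conj_iff (hf : Antitone f) {a j : ℕ} (ha : a < K) : a < conj K f j ↔ j < f a := by
  constructor
  · intro h
    by_contra! hle
    have hsub : {b ∈ range K | j < f b} ⊆ range a := fun b hb => by
      rw [mem_filter] at hb
      exact mem_range.2 (lt_of_not_ge fun hab => (hb.2.trans_le (hf hab)).not_ge hle)
    exact (card_le_card hsub).trans_eq (card_range a) |>.not_gt h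
  · intro h
    have hsub : range (a + 1) ⊆ {b ∈ range K | j < f b} := fun b hb => by
      rw [mem_range] at hb
      exact mem_filter.2 ⟨mem_range.2 (by omega), h.trans_le (hf (by omega))⟩
    exact (card_range _).symm.trans_le (card_le_card hsub)

theorem hole_strictMono : StrictMono (hole K f) :=
  strictMono_nat_of_lt_succ fun j => by
    have := conj_antitone (f := f) (K := K) (Nat.le_add_right j 1)
    have := conj_le (K := K) (f := f) j
    unfold hole
    omega

theorem particle_strictAntiOn (hf : Antitone f) : StrictAntiOn (particle K f) (Set.Iio K) :=
  fun a _ b hb hab => by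
    have := hf hab.le
    simp only [Set.mem_Iio] at hb
    unfold particle
    omega

theorem hole_lt_particle (hf : Antitone f) {a j : ℕ} (ha : a < K) (hj : j < f a) :
    hole K f j < particle K f a := by
  have := (lt_conj_iff hf ha).2 hj
  have := conj_le (K := K) (f := f) j
  unfold hole particle
  omega

theorem particle_lt_hole (hf : Antitone f) {a j : ℕ} (ha : a < K) (hj : f a ≤ j) :
    particle K f a < hole K f j := by
  have := mt (lt_conj_iff hf ha).1 hj.not_gt
  unfold hole particle
  omega

theorem prod_hole_mul_prod_particle {M : Type*} [CommMonoid M] (hf : Antitone f) {a : ℕ}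
    (ha : a < K) (F : ℕ → M) :
    (∏ j ∈ range (f a), F (hole K f j)) * ∏ b ∈ Ico (a + 1) K, F (particle K f b) =
      ∏ v ∈ range (particle K f a), F v := by
  have hinj : Set.InjOn (particle K f) (Ico (a + 1) K) :=
    (particle_strictAntiOn hf).injOn.mono fun b hb => by
      simp only [coe_Ico, Set.mem_Ico] at hb
      exact hb.2
  have hdisj :
      Disjoint ((range (f a)).image (hole K f)) ((Ico (a + 1) K).image (particle K f)) := by
    simp only [disjoint_left, mem_image, mem_Ico]
    rintro _ ⟨j, -, rfl⟩ ⟨b, hb, hjb⟩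
    rcases lt_or_ge j (f b) with h | h
    · exact (hole_lt_particle hf hb.2 h).ne' hjb
    · exact (particle_lt_hole hf hb.2 h).ne hjb
  have hunion : (range (f a)).image (hole K f) ∪ (Ico (a + 1) K).image (particle K f) =
      range (particle K f a) := by
    refine eq_of_subset_of_card_le ?_ ?_
    · simp only [union_subset_iff, image_subset_iff, mem_range, mem_Ico]
      exact ⟨fun j hj => hole_lt_particle hf ha hj,
        fun b hb => particle_strictAntiOn hf (by simpa using ha) (by simpa using hb.2) hb.1⟩
    · rw [card_union_of_disjoint hdisj, card_image_of_injective _ hole_strictMono.injective,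
        card_image_of_injOn hinj, card_range, card_range, Nat.card_Ico, particle]
      omega
  rw [← prod_image fun _ _ _ _ h => hole_strictMono.injective h, ← prod_image hinj,
    ← prod_union hdisj, hunion]

theorem card_filter_Icc_eq_conj (lam : ℕ → ℕ) (j : ℕ) :
    #{t ∈ Icc 1 K | j + 1 ≤ lam t} = conj K (fun a => lam (a + 1)) j := by
  refine card_nbij' (· - 1) (· + 1) ?_ ?_ ?_ ?_ <;> intro t ht <;>
    simp only [mem_coe, mem_filter, mem_Icc, mem_range] at ht ⊢
  · exact ⟨by omega, by rw [Nat.sub_add_cancel ht.1.1]; omega⟩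
  all_goals omega

theorem natCast_particle {a : ℕ} (ha : a < K) : (particle K f a : R) = f a + K - 1 - a := by
  rw [particle, Nat.cast_add, Nat.cast_sub (by omega), Nat.cast_sub (by omega)]
  push_cast
  ring

theorem natCast_hole (j : ℕ) : (hole K f j : R) = K - conj K f j + j := by
  rw [hole, Nat.cast_add, Nat.cast_sub (conj_le j)]

variable {g : ℕ → ℕ}

theorem hookCross_mul_hookCross_mul_prod_eq (hf : Antitone f) (hg : Antitone g) (s : R) {a : ℕ}
    (ha : a < K) :
    hookCross K f g s a * hookCross K g f (-s) a *
        ((∏ b ∈ Ico (a + 1) K, (((particle K f a : R) - particle K f b) *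
          ((particle K g a : R) - particle K g b) * ((particle K f b : R) - (particle K g a + s)) *
          ((particle K g b : R) - (particle K f a + -s)))) *
          ((particle K g a : R) - (particle K f a + -s))) =
      (particle K f a)! * (particle K g a)! *
        ((∏ v ∈ range (particle K f a), (1 - s + v)) *
          ∏ v ∈ range (particle K g a + 1), (s + v)) := by
  set ν := particle K f a
  set μ := particle K g a
  have hook_f := prod_hole_mul_prod_particle hf ha fun v => (ν : R) - v
  have hook_g := prod_hole_mul_prod_particle hg ha fun v => (μ : R) - v
  have cross_f := prod_hole_mul_prod_particle hf ha fun v => (v : R) - (μ + s)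
  have cross_g := prod_hole_mul_prod_particle hg ha fun v => (v : R) - (ν - s)
  rw [prod_range_natCast_sub_eq_factorial] at hook_f hook_g
  rw [← prod_range_sub_mul_prod_range_sub, prod_range_succ, ← hook_f, ← hook_g, ← cross_f,
    ← cross_g]
  simp only [hookCross, prod_mul_distrib, ← sub_eq_add_neg]
  ring

end MayaDiagram

open MayaDiagram

theorem bare_coefficient_eq_prod_hookCross (K : ℕ) (lam mu : ℕ → ℕ) (σ : ℂ) :
    (∏ i ∈ Icc 1 K, ∏ j ∈ Icc 1 (lam i),
        1 / (((lam i : ℂ) - i + #{t ∈ Icc 1 K | j ≤ lam t} - j + 1) ^ 2 *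
          ((#{t ∈ Icc 1 K | j ≤ lam t} : ℂ) + mu i - i - j + 1 + 2 * σ) ^ 2)) *
      (∏ i ∈ Icc 1 K, ∏ j ∈ Icc 1 (mu i),
        1 / (((mu i : ℂ) - i + #{t ∈ Icc 1 K | j ≤ mu t} - j + 1) ^ 2 *
          ((lam i : ℂ) + #{t ∈ Icc 1 K | j ≤ mu t} - i - j + 1 - 2 * σ) ^ 2)) =
      ∏ a ∈ range K, ((hookCross K (fun a => lam (a + 1)) (fun a => mu (a + 1)) (2 * σ) a *
        hookCross K (fun a => mu (a + 1)) (fun a => lam (a + 1)) (-(2 * σ)) a) ^ 2)⁻¹ := by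
  rw [prod_Icc_one_eq_prod_range, prod_Icc_one_eq_prod_range, ← prod_mul_distrib]
  refine prod_congr rfl fun a ha => ?_
  rw [prod_Icc_one_eq_prod_range, prod_Icc_one_eq_prod_range, hookCross, hookCross, mul_pow,
    mul_inv, ← prod_pow, ← prod_pow, ← prod_inv_distrib, ← prod_inv_distrib]
  congr 1 <;> refine prod_congr rfl fun j _ => ?_ <;>
    rw [card_filter_Icc_eq_conj, natCast_particle (mem_range.1 ha),
      natCast_particle (mem_range.1 ha), natCast_hole, one_div] <;> push_cast <;> congr 1 <;> ring

theorem inv_sq_hookCross_mul_hookCross_eq {K : ℕ} {f g : ℕ → ℕ} (hf : Antitone f)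
    (hg : Antitone g) {σ : ℂ} (hs₀ : ∀ k : ℕ, 2 * σ ≠ -k) (hs₁ : ∀ k : ℕ, 1 - 2 * σ ≠ -k)
    {a : ℕ} (ha : a < K) :
    ((hookCross K f g (2 * σ) a * hookCross K g f (-(2 * σ)) a) ^ 2)⁻¹ =
      (Complex.Gamma (2 * σ) * Complex.Gamma (1 - 2 * σ)) ^ 2 *
        ((∏ b ∈ Ico (a + 1) K, ((particle K f a - σ) - (particle K f b - σ)) *
          ((particle K g a + σ) - (particle K g b + σ)) *
          ((particle K f a - σ) - (particle K g b + σ)) *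
          ((particle K f b - σ) - (particle K g a + σ))) *
          ((particle K f a - σ) - (particle K g a + σ))) ^ 2 *
        (1 / (Complex.Gamma (particle K f a - σ + 1 + σ) ^ 2 *
            Complex.Gamma (particle K f a - σ + 1 - σ) ^ 2) *
          (1 / (Complex.Gamma (particle K g a + σ + 1 + σ) ^ 2 *
            Complex.Gamma (particle K g a + σ + 1 - σ) ^ 2))) := by
  have hrow := hookCross_mul_hookCross_mul_prod_eq hf hg (2 * σ) ha
  have hN := mul_ne_zero
    (mul_ne_zero (Nat.cast_ne_zero.2 (Nat.factorial_ne_zero (particle K f a)) : (_ : ℂ) ≠ 0)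
      (Nat.cast_ne_zero.2 (Nat.factorial_ne_zero (particle K g a))))
    (mul_ne_zero (prod_range_add_natCast_ne_zero hs₁ (particle K f a))
      (prod_range_add_natCast_ne_zero hs₀ (particle K g a + 1)))
  rw [← hrow] at hN
  simp only [mul_ne_zero_iff] at hN
  obtain ⟨⟨hD₁, hD₂⟩, hW₁, hW₂⟩ := hN
  have hΓ₀ := Complex.Gamma_ne_zero hs₀
  have hΓ₁ := Complex.Gamma_ne_zero hs₁
  set ν := particle K f a
  set μ := particle K g a
  have hsq : ((∏ b ∈ Ico (a + 1) K, ((ν - σ) - (particle K f b - σ)) *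
      ((μ + σ) - (particle K g b + σ)) * ((ν - σ) - (particle K g b + σ)) *
      ((particle K f b - σ) - (μ + σ))) * ((ν - σ) - (μ + σ)) : ℂ) ^ 2 =
      ((∏ b ∈ Ico (a + 1) K, ((ν : ℂ) - particle K f b) * ((μ : ℂ) - particle K g b) *
        ((particle K f b : ℂ) - (μ + 2 * σ)) * ((particle K g b : ℂ) - (ν + -(2 * σ)))) *
        ((μ : ℂ) - (ν + -(2 * σ)))) ^ 2 := by
    rw [mul_pow, mul_pow, ← prod_pow, ← prod_pow]
    congr 1
    · exact prod_congr rfl fun b _ => by ring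
    · ring
  rw [one_div_Gamma_sq_mul_one_div_Gamma_sq hs₀ hs₁, hsq, ← hrow]
  field_simp

theorem bare_coefficient_matrix_model_general (K : ℕ) (σ : ℂ)
    (hσ : ∀ m : ℤ, 2 * σ ≠ (m : ℂ))
    (lam mu : ℕ → ℕ)
    (hlam_mono : ∀ i j, 1 ≤ i → i ≤ j → lam j ≤ lam i)
    (hmu_mono : ∀ i j, 1 ≤ i → i ≤ j → mu j ≤ mu i)
    (x : Fin (2 * K) → ℂ)
    (hx : ∀ i : Fin (2 * K), x i =
      if (i : ℕ) < K then
        ((lam ((i : ℕ) + 1) : ℂ) - (((i : ℕ) + 1 : ℕ) : ℂ) + (K : ℂ)) - σ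
      else
        ((mu ((i : ℕ) - K + 1) : ℂ) - (((i : ℕ) - K + 1 : ℕ) : ℂ) + (K : ℂ)) + σ) :
    (∏ i ∈ Finset.Icc 1 K, ∏ j ∈ Finset.Icc 1 (lam i),
        1 / ((((lam i : ℂ) - (i : ℂ) +
                ((((Finset.Icc 1 K).filter fun t => j ≤ lam t).card : ℂ)) - (j : ℂ) + 1)) ^ 2 *
            (((((Finset.Icc 1 K).filter fun t => j ≤ lam t).card : ℂ)
                + (mu i : ℂ) - (i : ℂ) - (j : ℂ) + 1 + 2 * σ)) ^ 2)) *
      (∏ i ∈ Finset.Icc 1 K, ∏ j ∈ Finset.Icc 1 (mu i),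
        1 / ((((mu i : ℂ) - (i : ℂ) +
                ((((Finset.Icc 1 K).filter fun t => j ≤ mu t).card : ℂ)) - (j : ℂ) + 1)) ^ 2 *
            (((lam i : ℂ) + (((Finset.Icc 1 K).filter fun t => j ≤ mu t).card : ℂ)
                - (i : ℂ) - (j : ℂ) + 1 - 2 * σ)) ^ 2)) =
      Complex.Gamma (2 * σ) ^ (2 * K) * Complex.Gamma (1 - 2 * σ) ^ (2 * K) *
        (∏ i : Fin (2 * K), ∏ j ∈ Finset.univ.filter (fun j : Fin (2 * K) => i < j),
          (x i - x j) ^ 2) *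
        ∏ i : Fin (2 * K),
          1 / (Complex.Gamma (x i + 1 + σ) ^ 2 * Complex.Gamma (x i + 1 - σ) ^ 2) := by
  have hs₀ : ∀ k : ℕ, 2 * σ ≠ -k := fun k h => hσ (-k) (by rw [h]; push_cast; ring)
  have hs₁ : ∀ k : ℕ, 1 - 2 * σ ≠ -k := fun k h => hσ (k + 1) (by push_cast; linear_combination -h)
  have hf : Antitone fun a => lam (a + 1) := fun a b hab => hlam_mono _ _ (by omega) (by omega)
  have hg : Antitone fun a => mu (a + 1) := fun a b hab => hmu_mono _ _ (by omega) (by omega)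
  set u : ℕ → ℂ := fun a => particle K (fun a => lam (a + 1)) a - σ
  set w : ℕ → ℂ := fun a => particle K (fun a => mu (a + 1)) a + σ
  have hx' : ∀ i : Fin (2 * K), x i = if (i : ℕ) < K then u i else w (i - K) := by
    intro i
    rw [hx i]
    split_ifs with h
    · simp only [u, natCast_particle h]; push_cast; ring
    · simp only [w, natCast_particle (by omega : (i : ℕ) - K < K)]; push_cast; ring
  have hΓ : Complex.Gamma (2 * σ) ^ (2 * K) * Complex.Gamma (1 - 2 * σ) ^ (2 * K) =
      ∏ _a ∈ range K, (Complex.Gamma (2 * σ) * Complex.Gamma (1 - 2 * σ)) ^ 2 := by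
    rw [prod_const, card_range, ← pow_mul, mul_pow]
  rw [bare_coefficient_eq_prod_hookCross, prod_sq_sub_of_eq_ite hx',
    prod_fin_two_mul_of_eq_ite hx' fun z =>
      1 / (Complex.Gamma (z + 1 + σ) ^ 2 * Complex.Gamma (z + 1 - σ) ^ 2),
    hΓ, ← prod_mul_distrib, ← prod_mul_distrib]
  exact prod_congr rfl fun a ha => inv_sq_hookCross_mul_hookCross_eq hf hg hs₀ hs₁ (mem_range.1 ha)

/-- Bare conformal block coefficient as a discrete Coulomb gas configuration:
for `σ` not half an integer and partitions `λ, μ` of length `≤ K`,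
`B_{λ,μ}([];σ) = Γ(2σ)^{2K} Γ(1−2σ)^{2K} ∏_{i<j}(x_i−x_j)² ∏_i v_σ(x_i)`,
with `v_σ(z) = 1/(Γ(z+1+σ)²Γ(z+1−σ)²)`, `x_i = λ_i − i + K − σ`,
`x_{K+i} = μ_i − i + K + σ`. -/
theorem bare_coefficient_matrix_model (K : ℕ) (hK : 0 < K) (σ : ℂ)
    (hσ : ∀ m : ℤ, 2 * σ ≠ (m : ℂ))
    (lam mu : ℕ → ℕ)
    (hlam_mono : ∀ i j, 1 ≤ i → i ≤ j → lam j ≤ lam i)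
    (hlam_len : ∀ i, K < i → lam i = 0)
    (hmu_mono : ∀ i j, 1 ≤ i → i ≤ j → mu j ≤ mu i)
    (hmu_len : ∀ i, K < i → mu i = 0)
    (x : Fin (2 * K) → ℂ)
    (hx : ∀ i : Fin (2 * K), x i =
      if (i : ℕ) < K then
        ((lam ((i : ℕ) + 1) : ℂ) - (((i : ℕ) + 1 : ℕ) : ℂ) + (K : ℂ)) - σ
      else
        ((mu ((i : ℕ) - K + 1) : ℂ) - (((i : ℕ) - K + 1 : ℕ) : ℂ) + (K : ℂ)) + σ) :
    (∏ i ∈ Finset.Icc 1 K, ∏ j ∈ Finset.Icc 1 (lam i),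
        1 / ((((lam i : ℂ) - (i : ℂ) +
                ((((Finset.Icc 1 K).filter fun t => j ≤ lam t).card : ℂ)) - (j : ℂ) + 1)) ^ 2 *
            (((((Finset.Icc 1 K).filter fun t => j ≤ lam t).card : ℂ)
                + (mu i : ℂ) - (i : ℂ) - (j : ℂ) + 1 + 2 * σ)) ^ 2)) *
      (∏ i ∈ Finset.Icc 1 K, ∏ j ∈ Finset.Icc 1 (mu i),
        1 / ((((mu i : ℂ) - (i : ℂ) +
                ((((Finset.Icc 1 K).filter fun t => j ≤ mu t).card : ℂ)) - (j : ℂ) + 1)) ^ 2 *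
            (((lam i : ℂ) + (((Finset.Icc 1 K).filter fun t => j ≤ mu t).card : ℂ)
                - (i : ℂ) - (j : ℂ) + 1 - 2 * σ)) ^ 2)) =
      Complex.Gamma (2 * σ) ^ (2 * K) * Complex.Gamma (1 - 2 * σ) ^ (2 * K) *
        (∏ i : Fin (2 * K), ∏ j ∈ Finset.univ.filter (fun j : Fin (2 * K) => i < j),
          (x i - x j) ^ 2) *
        ∏ i : Fin (2 * K),
          1 / (Complex.Gamma (x i + 1 + σ) ^ 2 * Complex.Gamma (x i + 1 - σ) ^ 2) :=
  bare_coefficient_matrix_model_general K σ hσ lam mu hlam_mono hmu_mono x hx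
end

section
/- Let σ ∈ ℂ with 2σ ∉ ℤ, K a positive integer, a⃗ = [a_1,…,a_p] with p ≤ 3, and let w(z) = 1/(Γ(a⃗;K−z)Γ(z+1+σ)²Γ(z+1−σ)²). Then for every complex u, the series ∑_{k=0}^{∞} w(k+σ)e^{u(k+σ)} converges absolutely and equals (e^{uσ}/(Γ(a⃗;K−σ)Γ(1+2σ)²)) · ₚF₃(−a_1−K+1+σ, …, −a_p−K+1+σ; 1+2σ, 1+2σ, 1; (−1)^p e^u), where ₚF₃ denotes the generalized hypergeometric function. -/
open Finset

open Polynomial Filter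

private lemma asc_ne_zero' {z : ℂ} (hz : ∀ j : ℕ, z + j ≠ 0) (k : ℕ) :
    (ascPochhammer ℂ k).eval z ≠ 0 := by
  induction k with
  | zero => simp
  | succ n ih =>
    rw [ascPochhammer_succ_eval]
    exact mul_ne_zero ih (hz n)

private lemma Gamma_add_nat' (z : ℂ) (hz : ∀ j : ℕ, z + j ≠ 0) (k : ℕ) :
    Complex.Gamma (z + k) = Complex.Gamma z * (ascPochhammer ℂ k).eval z := by
  induction k with
  | zero => simp
  | succ n ih =>
    have h1 : z + ((n : ℂ) + 1) = (z + n) + 1 := by ring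
    push_cast
    rw [h1, Complex.Gamma_add_one _ (hz n), ascPochhammer_succ_eval, ih]
    ring

private lemma Gamma_sub_nat' (z : ℂ) (hz : ∀ j : ℕ, z - ((j : ℂ) + 1) ≠ 0) (k : ℕ) :
    Complex.Gamma (z - k) * (ascPochhammer ℂ k).eval (1 - z) =
      Complex.Gamma z * (-1) ^ k := by
  induction k with
  | zero => simp
  | succ n ih =>
    have h1 : z - (n : ℂ) = (z - ((n : ℂ) + 1)) + 1 := by ring
    have h2 : Complex.Gamma (z - n) = (z - ((n : ℂ) + 1)) * Complex.Gamma (z - ((n : ℂ) + 1)) := by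
      rw [h1, Complex.Gamma_add_one _ (hz n)]
    push_cast
    rw [show z - ((n : ℂ) + 1) = z - (n + 1 : ℂ) by ring] at h2 ⊢
    rw [ascPochhammer_succ_eval]
    have h3 : (1 - z + n) = -(z - ((n:ℂ)+1)) := by ring
    calc Complex.Gamma (z - ((n:ℂ)+1)) * ((ascPochhammer ℂ n).eval (1 - z) * (1 - z + (n:ℂ)))
        = -( (z - ((n:ℂ)+1)) * Complex.Gamma (z - ((n:ℂ)+1)) * (ascPochhammer ℂ n).eval (1 - z)) := by
          rw [h3]; ring
      _ = -(Complex.Gamma (z - (n:ℂ)) * (ascPochhammer ℂ n).eval (1 - z)) := by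
          rw [← h2]
      _ = Complex.Gamma z * (-1) ^ (n + 1) := by rw [ih]; ring

private lemma key_term (K p : ℕ)
    (σ : ℂ) (hσ : ∀ m : ℤ, 2 * σ ≠ (m : ℂ))
    (a : Fin p → ℂ) (ha : ∀ t : Fin p, ∀ m : ℤ, a t - σ ≠ (m : ℂ)) (u : ℂ) (k : ℕ) :
    ((∏ t : Fin p, Complex.Gamma ((K : ℂ) - ((k : ℂ) + σ) + a t)) *
        (Complex.Gamma (((k : ℂ) + σ) + 1 + σ) ^ 2 *
          Complex.Gamma (((k : ℂ) + σ) + 1 - σ) ^ 2))⁻¹ *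
      Complex.exp (u * ((k : ℂ) + σ)) =
    (Complex.exp (u * σ) /
        ((∏ t : Fin p, Complex.Gamma ((K : ℂ) - σ + a t)) *
          Complex.Gamma (1 + 2 * σ) ^ 2)) *
      ((∏ t : Fin p, Polynomial.eval (-a t - (K : ℂ) + 1 + σ) (ascPochhammer ℂ k)) /
          (Polynomial.eval (1 + 2 * σ) (ascPochhammer ℂ k) ^ 2 *
            Polynomial.eval (1 : ℂ) (ascPochhammer ℂ k)) *
        ((-1 : ℂ) ^ p * Complex.exp u) ^ k / (Nat.factorial k : ℂ)) := by
  -- basic nonvanishing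
  have hβj : ∀ j : ℕ, (1 + 2 * σ) + (j : ℂ) ≠ 0 := by
    intro j h
    exact hσ (-(j + 1)) (by push_cast; linear_combination h)
  have hΓβ : Complex.Gamma (1 + 2 * σ) ≠ 0 := by
    refine Complex.Gamma_ne_zero fun m h => ?_
    exact hσ (-(m + 1)) (by push_cast; linear_combination h)
  have hcj : ∀ t : Fin p, ∀ j : ℕ, (-a t - (K : ℂ) + 1 + σ) + (j : ℂ) ≠ 0 := by
    intro t j h
    exact ha t (1 + j - K) (by push_cast; linear_combination -h)
  have hzsub : ∀ t : Fin p, ∀ j : ℕ, ((K : ℂ) - σ + a t) - ((j : ℂ) + 1) ≠ 0 := by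
    intro t j h
    exact ha t (j + 1 - K) (by push_cast; linear_combination h)
  have hΓz : ∀ t : Fin p, Complex.Gamma ((K : ℂ) - σ + a t) ≠ 0 := by
    intro t
    refine Complex.Gamma_ne_zero fun m h => ?_
    exact ha t (-(m : ℤ) - K) (by push_cast; linear_combination h)
  have hPβ : (ascPochhammer ℂ k).eval (1 + 2 * σ) ≠ 0 := asc_ne_zero' hβj k
  have hPc : ∀ t : Fin p, (ascPochhammer ℂ k).eval (-a t - (K : ℂ) + 1 + σ) ≠ 0 :=
    fun t => asc_ne_zero' (hcj t) k
  -- rewrite the three Gamma factors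
  have hG1 : Complex.Gamma (((k : ℂ) + σ) + 1 + σ) =
      Complex.Gamma (1 + 2 * σ) * (ascPochhammer ℂ k).eval (1 + 2 * σ) := by
    rw [show ((k : ℂ) + σ) + 1 + σ = (1 + 2 * σ) + (k : ℂ) by ring]
    exact Gamma_add_nat' _ hβj k
  have hG2 : Complex.Gamma (((k : ℂ) + σ) + 1 - σ) = (k.factorial : ℂ) := by
    rw [show ((k : ℂ) + σ) + 1 - σ = (k : ℂ) + 1 by ring]
    exact Complex.Gamma_nat_eq_factorial k
  have hG3 : ∀ t : Fin p, Complex.Gamma ((K : ℂ) - ((k : ℂ) + σ) + a t) =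
      Complex.Gamma ((K : ℂ) - σ + a t) * (-1) ^ k /
        (ascPochhammer ℂ k).eval (-a t - (K : ℂ) + 1 + σ) := by
    intro t
    have := Gamma_sub_nat' ((K : ℂ) - σ + a t) (hzsub t) k
    rw [show (1 : ℂ) - ((K : ℂ) - σ + a t) = -a t - (K : ℂ) + 1 + σ by ring] at this
    rw [eq_div_iff (hPc t),
      show (K : ℂ) - ((k : ℂ) + σ) + a t = ((K : ℂ) - σ + a t) - (k : ℂ) by ring]
    exact this
  have hprod : (∏ t : Fin p, Complex.Gamma ((K : ℂ) - ((k : ℂ) + σ) + a t)) =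
      (∏ t : Fin p, Complex.Gamma ((K : ℂ) - σ + a t)) * ((-1 : ℂ) ^ k) ^ p /
        ∏ t : Fin p, (ascPochhammer ℂ k).eval (-a t - (K : ℂ) + 1 + σ) := by
    rw [Finset.prod_congr rfl fun t _ => hG3 t, Finset.prod_div_distrib,
      Finset.prod_mul_distrib, Finset.prod_const, Finset.card_univ, Fintype.card_fin]
  have hexp : Complex.exp (u * ((k : ℂ) + σ)) = Complex.exp u ^ k * Complex.exp (u * σ) := by
    rw [show u * ((k : ℂ) + σ) = (k : ℂ) * u + u * σ by ring, Complex.exp_add,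
      Complex.exp_nat_mul]
  rw [hprod, hG1, hG2, hexp, ascPochhammer_eval_one]
  have hA : (∏ t : Fin p, Complex.Gamma ((K : ℂ) - σ + a t)) ≠ 0 :=
    Finset.prod_ne_zero_iff.mpr fun t _ => hΓz t
  have hB : (∏ t : Fin p, (ascPochhammer ℂ k).eval (-a t - (K : ℂ) + 1 + σ)) ≠ 0 :=
    Finset.prod_ne_zero_iff.mpr fun t _ => hPc t
  have hfac : (k.factorial : ℂ) ≠ 0 := Nat.cast_ne_zero.mpr k.factorial_ne_zero
  rw [mul_pow ((-1 : ℂ) ^ p), ← pow_mul, ← pow_mul, mul_comm k p]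
  set A := ∏ t : Fin p, Complex.Gamma ((K : ℂ) - σ + a t) with hAdef
  set B := ∏ t : Fin p, (ascPochhammer ℂ k).eval (-a t - (K : ℂ) + 1 + σ) with hBdef
  set G := Complex.Gamma (1 + 2 * σ) with hGdef
  set P := (ascPochhammer ℂ k).eval (1 + 2 * σ) with hPdef
  set F := (k.factorial : ℂ) with hFdef
  set E := Complex.exp u with hEdef
  set S := Complex.exp (u * σ) with hSdef
  have hden : A * G ^ 2 * (P ^ 2 * F * F) ≠ 0 :=
    mul_ne_zero (mul_ne_zero hA (pow_ne_zero 2 hΓβ))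
      (mul_ne_zero (mul_ne_zero (pow_ne_zero 2 hPβ) hfac) hfac)
  rcases Nat.even_or_odd (p * k) with he | ho
  · rw [Even.neg_one_pow he]
    field_simp
  · rw [Odd.neg_one_pow ho]
    field_simp

private lemma asc_ne_zero'' {z : ℂ} (hz : ∀ j : ℕ, z + j ≠ 0) (k : ℕ) :
    (ascPochhammer ℂ k).eval z ≠ 0 := by
  induction k with
  | zero => simp
  | succ n ih =>
    rw [ascPochhammer_succ_eval]
    exact mul_ne_zero ih (hz n)

set_option maxHeartbeats 1000000 in
private lemma g_summable (K p : ℕ) (hp : p ≤ 3) (σ : ℂ)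
    (hσ : ∀ m : ℤ, 2 * σ ≠ (m : ℂ)) (a : Fin p → ℂ) (u : ℂ) :
    Summable fun k : ℕ =>
      ‖(∏ t : Fin p, Polynomial.eval (-a t - (K : ℂ) + 1 + σ) (ascPochhammer ℂ k)) /
          (Polynomial.eval (1 + 2 * σ) (ascPochhammer ℂ k) ^ 2 *
            Polynomial.eval (1 : ℂ) (ascPochhammer ℂ k)) *
        ((-1 : ℂ) ^ p * Complex.exp u) ^ k / (Nat.factorial k : ℂ)‖ := by
  have hβj : ∀ j : ℕ, (1 + 2 * σ) + (j : ℂ) ≠ 0 := by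
    intro j h
    exact hσ (-(j + 1)) (by push_cast; linear_combination h)
  have h1j : ∀ j : ℕ, (1 : ℂ) + (j : ℂ) ≠ 0 := by
    intro j h
    have : ((j + 1 : ℕ) : ℂ) = 0 := by push_cast; linear_combination h
    exact Nat.cast_ne_zero.mpr j.succ_ne_zero this
  set g : ℕ → ℂ := fun k =>
    (∏ t : Fin p, Polynomial.eval (-a t - (K : ℂ) + 1 + σ) (ascPochhammer ℂ k)) /
        (Polynomial.eval (1 + 2 * σ) (ascPochhammer ℂ k) ^ 2 *
          Polynomial.eval (1 : ℂ) (ascPochhammer ℂ k)) *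
      ((-1 : ℂ) ^ p * Complex.exp u) ^ k / (Nat.factorial k : ℂ) with hg
  have grec : ∀ k : ℕ, g (k + 1) =
      g k * ((∏ t : Fin p, (-a t - (K : ℂ) + 1 + σ + k)) * ((-1 : ℂ) ^ p * Complex.exp u) /
        ((1 + 2 * σ + (k : ℂ)) ^ 2 * ((1 : ℂ) + k) * ((k : ℂ) + 1))) := by
    intro k
    have hsplit : (∏ t : Fin p,
          Polynomial.eval (-a t - (K : ℂ) + 1 + σ) (ascPochhammer ℂ (k + 1)))
        = (∏ t : Fin p, Polynomial.eval (-a t - (K : ℂ) + 1 + σ) (ascPochhammer ℂ k)) *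
          ∏ t : Fin p, (-a t - (K : ℂ) + 1 + σ + k) := by
      rw [← Finset.prod_mul_distrib]
      exact Finset.prod_congr rfl fun t _ => ascPochhammer_succ_eval k _
    show ((∏ t : Fin p,
          Polynomial.eval (-a t - (K : ℂ) + 1 + σ) (ascPochhammer ℂ (k + 1))) /
        (Polynomial.eval (1 + 2 * σ) (ascPochhammer ℂ (k + 1)) ^ 2 *
          Polynomial.eval (1 : ℂ) (ascPochhammer ℂ (k + 1))) *
      ((-1 : ℂ) ^ p * Complex.exp u) ^ (k + 1) / (Nat.factorial (k + 1) : ℂ)) = _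
    rw [hsplit, ascPochhammer_succ_eval, ascPochhammer_succ_eval, pow_succ,
      show ((Nat.factorial (k + 1) : ℂ)) = ((k : ℂ) + 1) * (Nat.factorial k : ℂ) by
        rw [Nat.factorial_succ]; push_cast; ring]
    have hPβ : (ascPochhammer ℂ k).eval (1 + 2 * σ) ≠ 0 := asc_ne_zero'' hβj k
    have hP1 : (ascPochhammer ℂ k).eval (1 : ℂ) ≠ 0 := asc_ne_zero'' h1j k
    have hb1 : (1 + 2 * σ + (k : ℂ)) ≠ 0 := hβj k
    have hb2 : ((1 : ℂ) + (k : ℂ)) ≠ 0 := h1j k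
    have hb3 : ((k : ℂ) + 1) ≠ 0 := by rw [add_comm]; exact h1j k
    have hkf : ((Nat.factorial k : ℕ) : ℂ) ≠ 0 := Nat.cast_ne_zero.mpr k.factorial_ne_zero
    simp only [hg]
    generalize (∏ t : Fin p,
        Polynomial.eval (-a t - (K : ℂ) + 1 + σ) (ascPochhammer ℂ k)) = N
    generalize (∏ t : Fin p, (-a t - (K : ℂ) + 1 + σ + (k : ℂ))) = M
    field_simp
    ring
  apply summable_of_ratio_norm_eventually_le (r := 1 / 2) (by norm_num)
  simp only [norm_norm]
  have e1 : ∀ᶠ k : ℕ in atTop,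
      (1 + ∑ t : Fin p, ‖-a t - (K : ℂ) + 1 + σ‖ : ℝ) ≤ (k : ℝ) :=
    tendsto_natCast_atTop_atTop.eventually_ge_atTop _
  have e2 : ∀ᶠ k : ℕ in atTop, 2 * ‖(1 + 2 * σ : ℂ)‖ + 1 ≤ (k : ℝ) :=
    tendsto_natCast_atTop_atTop.eventually_ge_atTop _
  have e3 : ∀ᶠ k : ℕ in atTop, 64 * ‖Complex.exp u‖ ≤ (k : ℝ) :=
    tendsto_natCast_atTop_atTop.eventually_ge_atTop _
  filter_upwards [e1, e2, e3] with k h1 h2 h3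
  show ‖g (k + 1)‖ ≤ 1 / 2 * ‖g k‖
  rw [grec k, norm_mul, mul_comm]
  have hk0 : (0 : ℝ) ≤ (k : ℝ) := Nat.cast_nonneg k
  refine mul_le_mul_of_nonneg_right ?_ (norm_nonneg _)
  -- bound the ratio factor by 1/2
  have hk1 : ‖(1 : ℂ) + (k : ℂ)‖ = (k : ℝ) + 1 := by
    rw [show (1 : ℂ) + (k : ℂ) = ((k + 1 : ℕ) : ℂ) by push_cast; ring, Complex.norm_natCast]
    push_cast; ring
  have hk2 : ‖(k : ℂ) + 1‖ = (k : ℝ) + 1 := by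
    rw [show (k : ℂ) + 1 = ((k + 1 : ℕ) : ℂ) by push_cast; ring, Complex.norm_natCast]
    push_cast; ring
  simp only [norm_div, norm_mul, norm_pow, norm_prod, norm_neg, norm_one, one_pow,
    one_mul, hk1, hk2]
  set t : ℝ := (k : ℝ) + 1 with ht
  have ht1 : (1 : ℝ) ≤ t := by simp only [ht]; linarith
  have hnum : (∏ t' : Fin p, ‖-a t' - (K : ℂ) + 1 + σ + (k : ℂ)‖) ≤ (2 * t) ^ 3 := by
    calc (∏ t' : Fin p, ‖-a t' - (K : ℂ) + 1 + σ + (k : ℂ)‖)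
        ≤ ∏ _t' : Fin p, (2 * t) := by
          refine Finset.prod_le_prod (fun _ _ => norm_nonneg _) (fun i _ => ?_)
          have hb1 : ‖-a i - (K : ℂ) + 1 + σ + (k : ℂ)‖ ≤
              ‖-a i - (K : ℂ) + 1 + σ‖ + ‖(k : ℂ)‖ := norm_add_le _ _
          have hb2 : ‖-a i - (K : ℂ) + 1 + σ‖ ≤
              ∑ t' : Fin p, ‖-a t' - (K : ℂ) + 1 + σ‖ :=
            Finset.single_le_sum (f := fun t' : Fin p => ‖-a t' - (K : ℂ) + 1 + σ‖)
              (fun _ _ => norm_nonneg _) (Finset.mem_univ i)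
          rw [Complex.norm_natCast] at hb1
          simp only [ht]
          linarith
      _ = (2 * t) ^ p := by rw [Finset.prod_const, Finset.card_univ, Fintype.card_fin]
      _ ≤ (2 * t) ^ 3 := pow_le_pow_right₀ (by linarith) hp
  have hβk : t / 2 ≤ ‖1 + 2 * σ + (k : ℂ)‖ := by
    have e : (k : ℂ) = (1 + 2 * σ + (k : ℂ)) - (1 + 2 * σ) := by ring
    have h' : ‖(k : ℂ)‖ ≤ ‖1 + 2 * σ + (k : ℂ)‖ + ‖(1 + 2 * σ : ℂ)‖ := by
      calc ‖(k : ℂ)‖ = ‖(1 + 2 * σ + (k : ℂ)) - (1 + 2 * σ)‖ := by rw [← e]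
        _ ≤ _ := norm_sub_le _ _
    rw [Complex.norm_natCast] at h'
    simp only [ht]
    linarith
  have hpos : (0 : ℝ) < ‖1 + 2 * σ + (k : ℂ)‖ ^ 2 * t * t := by
    have : (0 : ℝ) < ‖1 + 2 * σ + (k : ℂ)‖ := by linarith
    positivity
  rw [div_le_iff₀ hpos]
  have ha1 : (∏ t' : Fin p, ‖-a t' - (K : ℂ) + 1 + σ + (k : ℂ)‖) * ‖Complex.exp u‖ ≤
      (2 * t) ^ 3 * ‖Complex.exp u‖ :=
    mul_le_mul_of_nonneg_right hnum (norm_nonneg _)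
  have hE : ‖Complex.exp u‖ ≤ t / 64 := by simp only [ht]; linarith
  have ha2 : (2 * t) ^ 3 * ‖Complex.exp u‖ ≤ (2 * t) ^ 3 * (t / 64) :=
    mul_le_mul_of_nonneg_left hE (by positivity)
  have ha3 : (t / 2) ^ 2 ≤ ‖1 + 2 * σ + (k : ℂ)‖ ^ 2 :=
    pow_le_pow_left₀ (by positivity) hβk 2
  have ha4 : (t / 2) ^ 2 * (t * t) ≤ ‖1 + 2 * σ + (k : ℂ)‖ ^ 2 * (t * t) :=
    mul_le_mul_of_nonneg_right ha3 (by positivity)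
  have key : (2 * t) ^ 3 * (t / 64) = 1 / 2 * ((t / 2) ^ 2 * (t * t)) := by ring
  have ha5 : 1 / 2 * ((t / 2) ^ 2 * (t * t)) ≤ 1 / 2 * (‖1 + 2 * σ + (k : ℂ)‖ ^ 2 * (t * t)) := by
    linarith [ha4]
  have ha6 : 1 / 2 * (‖1 + 2 * σ + (k : ℂ)‖ ^ 2 * (t * t)) =
      1 / 2 * (‖1 + 2 * σ + (k : ℂ)‖ ^ 2 * t * t) := by ring
  calc (∏ t' : Fin p, ‖-a t' - (K : ℂ) + 1 + σ + (k : ℂ)‖) * ‖Complex.exp u‖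
      ≤ (2 * t) ^ 3 * ‖Complex.exp u‖ := ha1
    _ ≤ (2 * t) ^ 3 * (t / 64) := ha2
    _ = 1 / 2 * ((t / 2) ^ 2 * (t * t)) := key
    _ ≤ 1 / 2 * (‖1 + 2 * σ + (k : ℂ)‖ ^ 2 * (t * t)) := ha5
    _ = 1 / 2 * (‖1 + 2 * σ + (k : ℂ)‖ ^ 2 * t * t) := by ring

/-- Half-lattice sum as a generalized hypergeometric function: for `2σ ∉ ℤ`, generic
`a⃗ = [a_1,…,a_p]` with `p ≤ 3`, and `w(z) = 1/(Γ(a⃗;K−z)Γ(z+1+σ)²Γ(z+1−σ)²)`, the series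
`∑_{k≥0} w(k+σ)e^{u(k+σ)}` converges absolutely and equals
`(e^{uσ}/(Γ(a⃗;K−σ)Γ(1+2σ)²)) · ₚF₃(−a⃗−K+1+σ; 1+2σ, 1+2σ, 1; (−1)^p e^u)`, where the
generalized hypergeometric series is written via ascending Pochhammer symbols. -/
theorem half_lattice_sum_hypergeometric (K p : ℕ) (hK : 0 < K) (hp : p ≤ 3)
    (σ : ℂ) (hσ : ∀ m : ℤ, 2 * σ ≠ (m : ℂ))
    (a : Fin p → ℂ) (ha : ∀ t : Fin p, ∀ m : ℤ, a t - σ ≠ (m : ℂ)) (u : ℂ) :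
    (Summable fun k : ℕ =>
        ‖((∏ t : Fin p, Complex.Gamma ((K : ℂ) - ((k : ℂ) + σ) + a t)) *
            (Complex.Gamma (((k : ℂ) + σ) + 1 + σ) ^ 2 *
              Complex.Gamma (((k : ℂ) + σ) + 1 - σ) ^ 2))⁻¹ *
          Complex.exp (u * ((k : ℂ) + σ))‖) ∧
      (∑' k : ℕ,
          ((∏ t : Fin p, Complex.Gamma ((K : ℂ) - ((k : ℂ) + σ) + a t)) *
              (Complex.Gamma (((k : ℂ) + σ) + 1 + σ) ^ 2 *
                Complex.Gamma (((k : ℂ) + σ) + 1 - σ) ^ 2))⁻¹ *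
            Complex.exp (u * ((k : ℂ) + σ))) =
        (Complex.exp (u * σ) /
            ((∏ t : Fin p, Complex.Gamma ((K : ℂ) - σ + a t)) *
              Complex.Gamma (1 + 2 * σ) ^ 2)) *
          ∑' k : ℕ,
            (∏ t : Fin p, Polynomial.eval (-a t - (K : ℂ) + 1 + σ) (ascPochhammer ℂ k)) /
                (Polynomial.eval (1 + 2 * σ) (ascPochhammer ℂ k) ^ 2 *
                  Polynomial.eval (1 : ℂ) (ascPochhammer ℂ k)) *
              ((-1 : ℂ) ^ p * Complex.exp u) ^ k / (Nat.factorial k : ℂ) := by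
  have key := key_term K p σ hσ a ha u
  constructor
  · simp only [key, norm_mul]
    exact (g_summable K p hp σ hσ a u).mul_left _
  · rw [tsum_congr key]
    exact tsum_mul_left
end
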